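/- Let X be a zigzag poset, ι : X' ↪ X the inclusion of the alternating subposet, and η : id → ι_* ι* the unit of the adjunction ι* ⊣ ι_*. Then for every sheaf F of vector spaces on X, the induced map on global sections Γ(η_F) : Γ(F) → Γ(ι_* ι* F) is an isomorphism, where Γ = lim. -/

import Mathlib

open CategoryTheory

/-! Zigzag posets.  A zigzag poset is a finite poset whose Hasse diagram is a path
`x_0 — x_1 — ... — x_n` with arbitrarily oriented edges.  We encode the orientation
of the edge between `x_l` and `x_{l+1}` by `o l : Bool` (`true` means `x_l < x_{l+1}`),
and `x_i ≤ x_j` iff all the edges between them point from `x_i` towards `x_j`. -/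

/-- The order relation of the zigzag poset with edge orientations `o`. -/
def zigzagLE (o : ℕ → Bool) (i j : ℕ) : Prop :=
  (i ≤ j ∧ ∀ l, i ≤ l → l < j → o l = true) ∨
  (j ≤ i ∧ ∀ l, j ≤ l → l < i → o l = false)

theorem zigzagLE_refl (o : ℕ → Bool) (i : ℕ) : zigzagLE o i i :=
  Or.inl ⟨le_rfl, fun _ h1 h2 => absurd (lt_of_le_of_lt h1 h2) (lt_irrefl _)⟩

theorem zigzagLE_trans (o : ℕ → Bool) (i j l : ℕ)
    (h1 : zigzagLE o i j) (h2 : zigzagLE o j l) : zigzagLE o i l := by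
  rcases h1 with ⟨hij, hup1⟩ | ⟨hji, hdn1⟩ <;> rcases h2 with ⟨hjl, hup2⟩ | ⟨hlj, hdn2⟩
  · refine Or.inl ⟨le_trans hij hjl, fun m hm1 hm2 => ?_⟩
    rcases Nat.lt_or_ge m j with h | h
    · exact hup1 m hm1 h
    · exact hup2 m h hm2
  · rcases le_or_gt i l with h | h
    · exact Or.inl ⟨h, fun m hm1 hm2 => hup1 m hm1 (lt_of_lt_of_le hm2 hlj)⟩
    · exact Or.inr ⟨le_of_lt h, fun m hm1 hm2 => hdn2 m hm1 (lt_of_lt_of_le hm2 hij)⟩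
  · rcases le_or_gt i l with h | h
    · exact Or.inl ⟨h, fun m hm1 hm2 => hup2 m (le_trans hji hm1) hm2⟩
    · exact Or.inr ⟨le_of_lt h, fun m hm1 hm2 => hdn1 m (le_trans hjl hm1) hm2⟩
  · refine Or.inr ⟨le_trans hlj hji, fun m hm1 hm2 => ?_⟩
    rcases Nat.lt_or_ge m j with h | h
    · exact hdn2 m hm1 h
    · exact hdn1 m h hm2

theorem zigzagLE_antisymm (o : ℕ → Bool) (i j : ℕ)
    (h1 : zigzagLE o i j) (h2 : zigzagLE o j i) : i = j := by
  rcases h1 with ⟨hij, hup1⟩ | ⟨hji, hdn1⟩ <;>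
    rcases h2 with ⟨hji', hup2⟩ | ⟨hij', hdn2⟩
  · omega
  · rcases Nat.lt_or_ge i j with h | h
    · have ht := hup1 i le_rfl h
      have hf := hdn2 i le_rfl h
      simp [ht] at hf
    · omega
  · rcases Nat.lt_or_ge j i with h | h
    · have ht := hup2 j le_rfl h
      have hf := hdn1 j le_rfl h
      simp [ht] at hf
    · omega
  · omega

/-- The zigzag poset on `{x_0, ..., x_n}` with edge orientations `o`. -/
def Zigzag (n : ℕ) (o : ℕ → Bool) : Type := Fin (n + 1)

instance (n : ℕ) (o : ℕ → Bool) : PartialOrder (Zigzag n o) where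
  le i j := zigzagLE o (Fin.val i) (Fin.val j)
  le_refl i := zigzagLE_refl o _
  le_trans i j l := zigzagLE_trans o _ _ _
  le_antisymm i j h1 h2 := Fin.ext (zigzagLE_antisymm o _ _ h1 h2)

/-- The index of a point of the zigzag poset. -/
def Zigzag.idx {n : ℕ} {o : ℕ → Bool} (x : Zigzag n o) : ℕ := Fin.val x

/-- The alternating subposet `X' ⊆ X`: all minimal elements together with the
internal maximal elements (the maximal elements flanked by minimal elements on
both sides); this is the alternating sequence of minimal and internal maximal
elements of the zigzag. -/
def altSet (n : ℕ) (o : ℕ → Bool) : Set (Zigzag n o) :=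
  {x | IsMin x ∨ (IsMax x ∧ (∃ y : Zigzag n o, IsMin y ∧ y.idx < x.idx) ∧
    (∃ y : Zigzag n o, IsMin y ∧ x.idx < y.idx))}

/-- The alternating subposet, with the induced order. -/
def AltSub (n : ℕ) (o : ℕ → Bool) : Type := {x : Zigzag n o // x ∈ altSet n o}

instance (n : ℕ) (o : ℕ → Bool) : PartialOrder (AltSub n o) :=
  inferInstanceAs (PartialOrder {x : Zigzag n o // x ∈ altSet n o})

/-- The inclusion `ι : X' ↪ X` is order preserving. -/
lemma altIncl_monotone (n : ℕ) (o : ℕ → Bool) :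
    Monotone (fun x : AltSub n o => (x.val : Zigzag n o)) := fun _ _ h => h

/-- The restriction (pullback) functor `ι*` of sheaves along the inclusion of the
alternating subposet. -/
noncomputable def restrictAlt (n : ℕ) (o : ℕ → Bool) (C : Type*) [Category C] :
    (Zigzag n o ⥤ C) ⥤ (AltSub n o ⥤ C) :=
  (Functor.whiskeringLeft (AltSub n o) (Zigzag n o) C).obj (altIncl_monotone n o).functor

open CategoryTheory.Limits

/-! The inclusion `ι : X' ↪ X` is an initial functor: below every `x` there is a greatest
element of `X'`, namely `x` itself if `x ∈ X'`, and otherwise the unique minimal element below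
`x` (two minimal elements below `x` on opposite sides would make `x` an internal maximum).
For an initial `ι`, maps `V ⟶ Γ(F)` are cones over `F`, which correspond bijectively to cones
over `ι* F`, i.e. to maps `V ⟶ Γ(ι_* ι* F)`; by Yoneda, `Γ(η_F)` is an isomorphism. -/

namespace CategoryTheory

variable {J J' C : Type*} [Category J] [Category J'] [Category C]

theorem Functor.Initial.bijective_whiskerLeft (ι : J' ⥤ J) [ι.Initial] (F : J ⥤ C) (V : C) :
    Function.Bijective fun f : (Functor.const J).obj V ⟶ F => Functor.whiskerLeft ι f := by
  refine ⟨fun f₁ f₂ h => ?_, fun g => ⟨(extendCone.obj (Cone.mk V g)).π, ?_⟩⟩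
  · ext Y
    let u := Initial.homToLift ι Y
    calc f₁.app Y = f₁.app (ι.obj (Initial.lift ι Y)) ≫ F.map u := by simpa using f₁.naturality u
      _ = f₂.app (ι.obj (Initial.lift ι Y)) ≫ F.map u :=
        congrArg (· ≫ F.map u) (NatTrans.congr_app h _)
      _ = f₂.app Y := by simpa using (f₂.naturality u).symm
  · ext X
    exact (extendCone_obj_π_app' (Cone.mk V g) (𝟙 (ι.obj X))).trans
      (by rw [F.map_id]; exact Category.comp_id _)

theorem isIso_lim_map_unit_of_initial [HasLimitsOfShape J C] (ι : J' ⥤ J) [ι.Initial]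
    (R : (J' ⥤ C) ⥤ (J ⥤ C)) (adj : (Functor.whiskeringLeft J' J C).obj ι ⊣ R) (F : J ⥤ C) :
    IsIso ((lim : (J ⥤ C) ⥤ C).map (adj.unit.app F)) := by
  rw [isIso_iff_yoneda_map_bijective]
  intro V
  let e := fun G : J ⥤ C => constLimAdj.homEquiv V G
  have hcomp : (e _).symm ∘ (fun x : V ⟶ lim.obj F => x ≫ lim.map (adj.unit.app F)) =
      adj.homEquiv _ _ ∘ (fun f => Functor.whiskerLeft ι f) ∘ (e F).symm := by
    funext x
    rw [Function.comp_apply, Adjunction.homEquiv_naturality_right_symm, Function.comp_apply,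
      Function.comp_apply, Adjunction.homEquiv_unit]
    exact (adj.unit_naturality _).symm
  refine ((e _).symm.bijective.of_comp_iff' _).mp (hcomp ▸ ?_)
  exact (adj.homEquiv _ _).bijective.comp <|
    (Functor.Initial.bijective_whiskerLeft ι F V).comp (e F).symm.bijective

end CategoryTheory

theorem Monotone.initial_functor_of_isGreatest {α β : Type*} [Preorder α] [Preorder β]
    {f : α → β} (hf : Monotone f) (h : ∀ b, ∃ a, IsGreatest {a | f a ≤ b} a) :
    hf.functor.Initial where
  out b := by
    obtain ⟨a, hab, ha⟩ := h b
    exact isConnected_of_isTerminal _ <| IsTerminal.ofUniqueHom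
      (Y := CostructuredArrow.mk (Y := a) (homOfLE hab))
      (fun c => CostructuredArrow.homMk (homOfLE (ha (leOfHom c.hom))) (Subsingleton.elim _ _))
      (fun _ _ => CostructuredArrow.hom_ext _ _ (Subsingleton.elim _ _))

namespace Zigzag

variable {n : ℕ} {o : ℕ → Bool}

theorem edge_eq_true_of_le {a b : Zigzag n o} (h : a ≤ b) {l : ℕ} (hal : a.idx ≤ l)
    (hlb : l < b.idx) : o l = true := by
  change zigzagLE o a.idx b.idx at h
  obtain ⟨-, h⟩ | ⟨hba, -⟩ := h
  · exact h l hal hlb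
  · omega

theorem edge_eq_false_of_le {a b : Zigzag n o} (h : a ≤ b) {l : ℕ} (hbl : b.idx ≤ l)
    (hla : l < a.idx) : o l = false := by
  change zigzagLE o a.idx b.idx at h
  obtain ⟨hab, -⟩ | ⟨-, h⟩ := h
  · omega
  · exact h l hbl hla

theorem le_of_le_of_idx_between {a b c : Zigzag n o} (h : a ≤ b)
    (hc : a.idx ≤ c.idx ∧ c.idx ≤ b.idx ∨ b.idx ≤ c.idx ∧ c.idx ≤ a.idx) : a ≤ c := by
  show zigzagLE o a.idx c.idx
  rcases hc with ⟨hac, hcb⟩ | ⟨hbc, hca⟩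
  · exact Or.inl ⟨hac, fun l hal hlc => edge_eq_true_of_le h hal (by omega)⟩
  · exact Or.inr ⟨hca, fun l hcl hla => edge_eq_false_of_le h (by omega) hla⟩

theorem isMax_of_le_of_le {a b x : Zigzag n o} (ha : a ≤ x) (hb : b ≤ x) (hax : a.idx < x.idx)
    (hxb : x.idx < b.idx) : IsMax x := by
  intro y hxy
  rcases lt_trichotomy y.idx x.idx with hyx | hyx | hxy'
  · have h₁ := edge_eq_false_of_le hxy (l := x.idx - 1) (by omega) (by omega)
    have h₂ := edge_eq_true_of_le ha (l := x.idx - 1) (by omega) (by omega)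
    simp [h₂] at h₁
  · exact le_of_eq (Fin.ext hyx)
  · have h₁ := edge_eq_true_of_le hxy le_rfl hxy'
    have h₂ := edge_eq_false_of_le hb le_rfl hxb
    simp [h₂] at h₁

theorem eq_of_isMin_of_le_of_notMem_altSet {x m₁ m₂ : Zigzag n o} (hx : x ∉ altSet n o)
    (h₁ : IsMin m₁) (h₂ : IsMin m₂) (l₁ : m₁ ≤ x) (l₂ : m₂ ≤ x) : m₁ = m₂ := by
  wlog h12 : m₁.idx ≤ m₂.idx generalizing m₁ m₂
  · exact (this h₂ h₁ l₂ l₁ (by omega)).symm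
  by_cases hleft : m₂.idx ≤ x.idx
  · have h := le_of_le_of_idx_between l₁ (Or.inl ⟨h12, hleft⟩)
    exact le_antisymm h (h₂ h)
  by_cases hright : x.idx ≤ m₁.idx
  · have h := le_of_le_of_idx_between l₂ (Or.inr ⟨hright, h12⟩)
    exact le_antisymm (h₁ h) h
  have hlt₁ : m₁.idx < x.idx := by omega
  have hlt₂ : x.idx < m₂.idx := by omega
  exact absurd (Or.inr ⟨isMax_of_le_of_le l₁ l₂ hlt₁ hlt₂, ⟨m₁, h₁, hlt₁⟩, ⟨m₂, h₂, hlt₂⟩⟩) hx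

theorem exists_isMin_le (x : Zigzag n o) : ∃ m : Zigzag n o, IsMin m ∧ m ≤ x := by
  have : Finite (Zigzag n o) := inferInstanceAs (Finite (Fin (n + 1)))
  obtain ⟨m, hmx, hm⟩ := exists_minimal_le_of_wellFoundedLT (fun _ : Zigzag n o => True) x trivial
  exact ⟨m, fun y hy => hm.2 trivial hy, hmx⟩

theorem exists_isGreatest_altSub_le (x : Zigzag n o) :
    ∃ y : AltSub n o, IsGreatest {z : AltSub n o | z.val ≤ x} y := by
  by_cases hx : x ∈ altSet n o
  · exact ⟨⟨x, hx⟩, le_refl x, fun _ hz => hz⟩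
  obtain ⟨m, hm, hmx⟩ := exists_isMin_le x
  refine ⟨⟨m, Or.inl hm⟩, hmx, fun z (hzx : z.val ≤ x) => ?_⟩
  rcases z.property with hz | ⟨hz, -⟩
  · exact (eq_of_isMin_of_le_of_notMem_altSet hx hz hm hzx hmx).le
  · exact absurd (le_antisymm hzx (hz hzx) ▸ z.property) hx

end Zigzag

instance altIncl_initial (n : ℕ) (o : ℕ → Bool) : (altIncl_monotone n o).functor.Initial :=
  (altIncl_monotone n o).initial_functor_of_isGreatest Zigzag.exists_isGreatest_altSub_le

/-- Let `X` be a zigzag poset, `ι : X' ↪ X` the inclusion of the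
alternating subposet and `η : id → ι_* ι*` the unit of the adjunction `ι* ⊣ ι_*`
(where `ι_*` is any right adjoint of the restriction functor `ι*`).  Then for every
sheaf `F` of vector spaces on `X`, the induced map on global sections
`Γ(η_F) : Γ(F) → Γ(ι_* ι* F)` (with `Γ = lim`) is an isomorphism. -/
theorem lim_unit_restrictAlt_isIso (k : Type) [Field k] (n : ℕ) (o : ℕ → Bool)
    (pushforward : (AltSub n o ⥤ ModuleCat k) ⥤ (Zigzag n o ⥤ ModuleCat k))
    (adj : restrictAlt n o (ModuleCat k) ⊣ pushforward)
    (F : Zigzag n o ⥤ ModuleCat k) :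
    IsIso ((lim : (Zigzag n o ⥤ ModuleCat k) ⥤ ModuleCat k).map (adj.unit.app F)) := by
  exact isIso_lim_map_unit_of_initial (altIncl_monotone n o).functor pushforward adj F
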